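/- If e_1,...,e_N satisfies e_1 = 0 and TV(e) = L∞(e), then e is monotone (nondecreasing or nonincreasing). -/

import Mathlib

open Finset

noncomputable def TV {n : ℕ} (e : Fin (n + 1) → ℝ) : ℝ :=
  ∑ i : Fin n, |e i.succ - e i.castSucc|

noncomputable def Linf {n : ℕ} (e : Fin (n + 1) → ℝ) : ℝ :=
  Finset.univ.sup' Finset.univ_nonempty (fun i => |e i|)

lemma sign_all_nonneg {ι : Type*} (s : Finset ι) (a : ι → ℝ)
    (h : ∑ i ∈ s, |a i| = ∑ i ∈ s, a i) : ∀ i ∈ s, 0 ≤ a i := by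
  have h0 : ∑ i ∈ s, (|a i| - a i) = 0 := by
    rw [Finset.sum_sub_distrib, h, sub_self]
  have := (Finset.sum_eq_zero_iff_of_nonneg (fun i _ => by
    have := le_abs_self (a i); linarith)).mp h0
  intro i hi
  have := this i hi
  have h1 : |a i| = a i := by linarith
  rw [← h1]; exact abs_nonneg _

theorem stmt_6 {n : ℕ} (e : Fin (n + 1) → ℝ) (h0 : e 0 = 0)
    (h : TV e = Linf e) : Monotone e ∨ Antitone e := by
  obtain ⟨k, -, hk⟩ := Finset.exists_mem_eq_sup' (Finset.univ_nonempty (α := Fin (n+1)))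
    (fun i => |e i|)
  set f : ℕ → ℝ := fun i => e ⟨min i n, by omega⟩ with hf
  have hfe : ∀ i : Fin (n+1), f i.val = e i := by
    intro i
    simp only [hf]
    congr 1
    exact Fin.ext (by simp [Nat.min_eq_left (Nat.le_of_lt_succ i.isLt)])
  have hstep : ∀ i : Fin n, e i.succ = f (i.val + 1) ∧ e i.castSucc = f i.val := by
    intro i
    constructor
    · rw [← hfe i.succ]; rfl
    · rw [← hfe i.castSucc]; rfl
  have hTV : TV e = ∑ i ∈ Finset.range n, |f (i+1) - f i| := by
    have h1 : ∑ i : Fin n, |e i.succ - e i.castSucc| =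
        ∑ i : Fin n, |f (i.val+1) - f i.val| :=
      Finset.sum_congr rfl (fun i _ => by rw [(hstep i).1, (hstep i).2])
    rw [TV, h1]
    exact Fin.sum_univ_eq_sum_range (fun i => |f (i+1) - f i|) n
  have hf0 : f 0 = 0 := by rw [← h0, ← hfe 0]; rfl
  have htel : ∀ m, ∑ i ∈ Finset.range m, (f (i+1) - f i) = f m := by
    intro m; rw [Finset.sum_range_sub f m, hf0, sub_zero]
  set K := k.val with hKdef
  have hKn : K ≤ n := Nat.le_of_lt_succ k.isLt
  have hfK : f K = e k := hfe k
  have hsplit : ∑ i ∈ Finset.range n, |f (i+1) - f i| =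
      ∑ i ∈ Finset.range K, |f (i+1) - f i| + ∑ i ∈ Finset.Ico K n, |f (i+1) - f i| := by
    rw [Finset.range_eq_Ico, ← Finset.sum_Ico_consecutive _ (Nat.zero_le K) hKn, Finset.range_eq_Ico]
  have habs : |e k| ≤ ∑ i ∈ Finset.range K, |f (i+1) - f i| := by
    rw [← hfK, ← htel K]
    exact Finset.abs_sum_le_sum_abs _ _
  have hLinf : Linf e = |e k| := hk
  have hTVk : ∑ i ∈ Finset.range n, |f (i+1) - f i| = |e k| := by
    rw [← hTV, h, hLinf]
  have htail_nonneg : 0 ≤ ∑ i ∈ Finset.Ico K n, |f (i+1) - f i| :=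
    Finset.sum_nonneg (fun i _ => abs_nonneg _)
  have hhead : ∑ i ∈ Finset.range K, |f (i+1) - f i| = |e k| :=
    le_antisymm (by nlinarith [hsplit, hTVk]) habs
  have htail : ∀ i ∈ Finset.Ico K n, f (i+1) - f i = 0 := by
    have hz : ∑ i ∈ Finset.Ico K n, |f (i+1) - f i| = 0 := by
      nlinarith [hsplit, hTVk, hhead]
    intro i hi
    have := (Finset.sum_eq_zero_iff_of_nonneg (fun i _ => abs_nonneg _)).mp hz i hi
    exact abs_eq_zero.mp this
  have htail' : ∀ i, K ≤ i → f (i+1) - f i = 0 := by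
    intro i hi
    rcases lt_or_ge i n with hin | hin
    · exact htail i (Finset.mem_Ico.mpr ⟨hi, hin⟩)
    · have he : f (i+1) = f i := by
        simp only [hf]
        congr 1
        exact Fin.ext (show min (i+1) n = min i n by omega)
      rw [he]; ring
  have hsum : ∑ i ∈ Finset.range K, (f (i+1) - f i) = e k := by rw [htel K, hfK]
  rcases le_or_gt 0 (e k) with hpos | hneg
  · left
    have hall : ∀ i ∈ Finset.range K, 0 ≤ f (i+1) - f i := by
      apply sign_all_nonneg
      rw [hsum, hhead, abs_of_nonneg hpos]
    have hmono : Monotone f := by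
      apply monotone_nat_of_le_succ
      intro i
      rcases lt_or_ge i K with hiK | hiK
      · have := hall i (Finset.mem_range.mpr hiK); linarith
      · have := htail' i hiK; linarith
    intro i j hij
    rw [← hfe i, ← hfe j]
    exact hmono hij
  · right
    have hall : ∀ i ∈ Finset.range K, 0 ≤ -(f (i+1) - f i) := by
      apply sign_all_nonneg
      have l : ∑ i ∈ Finset.range K, |(-(f (i+1) - f i))| =
          ∑ i ∈ Finset.range K, |f (i+1) - f i| :=
        Finset.sum_congr rfl (fun i _ => abs_neg _)
      have r : ∑ i ∈ Finset.range K, (-(f (i+1) - f i)) = -(e k) := by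
        rw [← hsum, Finset.sum_neg_distrib]
      rw [l, r, hhead, abs_of_neg hneg]
    have hanti : Antitone f := by
      apply antitone_nat_of_succ_le
      intro i
      rcases lt_or_ge i K with hiK | hiK
      · have := hall i (Finset.mem_range.mpr hiK); linarith
      · have := htail' i hiK; linarith
    intro i j hij
    rw [← hfe i, ← hfe j]
    exact hanti hij
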